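/- Let φ : S_6 → S_6 be an outer automorphism, and let T be a subgroup of S_6 of order 120. Then exactly one of T and φ(T) has a fixed point in {0,...,5} (a point stabilized by every element of the subgroup). -/

import Mathlib

/-!
An automorphism χ of S₆ that sends one transposition to a transposition sends all of them to
transpositions, and is then inner: the images of the five transpositions through a point i pairwise
do not commute, so they all move one point g(i), and χ is conjugation by g. Automorphisms preserve
order and sign, and an odd involution of S₆ is a transposition or a product of three disjoint ones.
Since automorphisms permute conjugacy classes, an outer automorphism exchanges these two classes,
so any two outer automorphisms differ by an inner one.

If T fixes i, then T is the stabilizer of i; were φ(T) to fix a point, φ would send the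
transpositions in T to odd involutions with a fixed point, i.e. to transpositions. If T fixes no
point, S₆ acts faithfully on the six cosets of T, which gives an automorphism ψ with ψ(T) inside a
point stabilizer; ψ is outer because T fixes nothing, so φ is ψ followed by a conjugation, and
φ(T) fixes a point.
-/

open Equiv Equiv.Perm MulAction Subgroup

namespace Equiv.Perm

variable {α : Type*}

theorem exists_apply_ne_of_not_commute {σ τ : Perm α} (h : ¬ Commute σ τ) :
    ∃ x, σ x ≠ x ∧ τ x ≠ x := by
  by_contra! h'
  exact h (Disjoint.commute fun x => or_iff_not_imp_left.mpr (h' x))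

section Swap

variable [DecidableEq α]

theorem not_commute_swap_swap {i j k : α} (hij : i ≠ j) (hik : i ≠ k) (hjk : j ≠ k) :
    ¬ Commute (swap i j) (swap i k) := by
  intro h
  have := congrArg (· i) h.eq
  simp only [Perm.mul_apply, swap_apply_left, swap_apply_of_ne_of_ne hij.symm hjk,
    swap_apply_of_ne_of_ne hik.symm hjk.symm] at this
  exact hjk this.symm

theorem IsSwap.eq_swap_apply {σ : Perm α} (hσ : σ.IsSwap) {x : α} (hx : σ x ≠ x) :
    σ = swap x (σ x) :=
  hσ.isCycle.eq_swap_of_apply_apply_eq_self hx (by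
    obtain ⟨a, b, -, rfl⟩ := hσ
    exact swap_apply_self a b x)

theorem IsSwap.eq_swap_of_apply_ne {σ : Perm α} (hσ : σ.IsSwap) {x y : α} (hxy : x ≠ y)
    (hx : σ x ≠ x) (hy : σ y ≠ y) : σ = swap x y := by
  rw [hσ.eq_swap_apply hx] at hy ⊢
  obtain ⟨-, rfl | rfl⟩ := swap_apply_ne_self_iff.mp hy
  · exact absurd rfl hxy
  · rfl

theorem IsSwap.apply_eq_of_apply_ne {σ : Perm α} (hσ : σ.IsSwap) {x y : α} (hxy : x ≠ y)
    (hx : σ x ≠ x) (hy : σ y ≠ y) : σ x = y := by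
  rw [hσ.eq_swap_of_apply_ne hxy hx hy, swap_apply_left]

theorem IsSwap.apply_apply_ne_of_not_commute {σ τ : Perm α} (hσ : σ.IsSwap) (h : ¬ Commute σ τ)
    {x : α} (hσx : σ x ≠ x) (hτx : τ x = x) : τ (σ x) ≠ σ x := by
  obtain ⟨z, hσz, hτz⟩ := exists_apply_ne_of_not_commute h
  have hxz : x ≠ z := by rintro rfl; exact hτz hτx
  rwa [hσ.apply_eq_of_apply_ne hxz hσx hσz]

theorem sign_mulAut_apply [Fintype α] (χ : MulAut (Perm α)) (σ : Perm α) :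
    sign (χ σ) = sign σ := by
  cases subsingleton_or_nontrivial α
  · rw [Subsingleton.elim (χ σ) σ]
  · have : sign.comp χ.toMonoidHom = sign :=
      eq_sign_of_surjective_hom ((sign_surjective α).comp χ.surjective)
    exact DFunLike.congr_fun this σ

theorem exists_ne_ne_of_three_le_card [Fintype α] (h3 : 3 ≤ Fintype.card α) (i : α) :
    ∃ j k, j ≠ i ∧ k ≠ i ∧ j ≠ k := by
  have : 1 < (Finset.univ.erase i).card := by
    rw [Finset.card_erase_of_mem (Finset.mem_univ i), Finset.card_univ]; omega
  obtain ⟨j, k, hj, hk, hjk⟩ := Finset.one_lt_card_iff.mp this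
  exact ⟨j, k, Finset.ne_of_mem_erase hj, Finset.ne_of_mem_erase hk, hjk⟩

section SwapPreserving

variable {χ : MulAut (Perm α)}

theorem not_commute_mulAut_swap_swap {i j k : α} (hij : i ≠ j) (hik : i ≠ k) (hjk : j ≠ k) :
    ¬ Commute (χ (swap i j)) (χ (swap i k)) := fun h =>
  not_commute_swap_swap hij hik hjk (by simpa using h.map χ.symm)

theorem mulAut_swap_eq_swap_apply (hχ : ∀ σ : Perm α, σ.IsSwap → (χ σ).IsSwap) {i j k p : α}
    (hij : i ≠ j) (hik : i ≠ k) (hjk : j ≠ k)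
    (hj : χ (swap i j) p ≠ p) (hk : χ (swap i k) p ≠ p) :
    χ (swap i j) p ≠ χ (swap i k) p ∧
      χ (swap j k) = swap (χ (swap i j) p) (χ (swap i k) p) := by
  set σ := χ (swap i j)
  set τ := χ (swap i k)
  have hσ : σ = swap p (σ p) := (hχ _ (swap_isSwap_iff.mpr hij)).eq_swap_apply hj
  have hτ : τ = swap p (τ p) := (hχ _ (swap_isSwap_iff.mpr hik)).eq_swap_apply hk
  have hne : σ p ≠ τ p := by
    intro h
    have : swap i j = swap i k := χ.injective (show σ = τ by rw [hσ, hτ, h])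
    simpa [hjk] using congrArg (· i) this
  refine ⟨hne, ?_⟩
  calc χ (swap j k) = χ (swap i j * swap k i * swap i j) := by
        rw [swap_mul_swap_mul_swap hik.symm hjk.symm]
    _ = swap p (σ p) * swap (τ p) p * swap p (σ p) := by
        rw [map_mul, map_mul, swap_comm k i, ← hσ, swap_comm (τ p) p, ← hτ]
    _ = swap (σ p) (τ p) := swap_mul_swap_mul_swap hk hne.symm

variable [Fintype α]

theorem exists_forall_mulAut_swap_apply_ne (hχ : ∀ σ : Perm α, σ.IsSwap → (χ σ).IsSwap)
    (h3 : 3 ≤ Fintype.card α) (i : α) : ∃ p, ∀ l, l ≠ i → χ (swap i l) p ≠ p := by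
  obtain ⟨j, k, hji, hki, hjk⟩ := exists_ne_ne_of_three_le_card h3 i
  obtain ⟨p, hj, hk⟩ := exists_apply_ne_of_not_commute
    (not_commute_mulAut_swap_swap (χ := χ) hji.symm hki.symm hjk)
  refine ⟨p, fun l hli hl => ?_⟩
  -- A transposition fixing `p` and commuting with neither image swaps their other two points,
  -- so it is `χ (swap j k)`.
  obtain rfl | hlj := eq_or_ne l j
  · exact hj hl
  obtain rfl | hlk := eq_or_ne l k
  · exact hk hl
  obtain ⟨hne, hjk_eq⟩ := mulAut_swap_eq_swap_apply hχ hji.symm hki.symm hjk hj hk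
  have hσl := (hχ _ (swap_isSwap_iff.mpr hji.symm)).apply_apply_ne_of_not_commute
    (not_commute_mulAut_swap_swap hji.symm hli.symm hlj.symm) hj hl
  have hτl := (hχ _ (swap_isSwap_iff.mpr hki.symm)).apply_apply_ne_of_not_commute
    (not_commute_mulAut_swap_swap hki.symm hli.symm hlk.symm) hk hl
  have : swap i l = swap j k := χ.injective <| by
    rw [hjk_eq, (hχ _ (swap_isSwap_iff.mpr hli.symm)).eq_swap_of_apply_ne hne hσl hτl]
  have hi := congrArg (· i) this
  simp only [swap_apply_left, swap_apply_of_ne_of_ne hji.symm hki.symm] at hi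
  exact hli hi

theorem injective_of_forall_mulAut_swap_apply_ne (hχ : ∀ σ : Perm α, σ.IsSwap → (χ σ).IsSwap)
    (h3 : 3 ≤ Fintype.card α) {f : α → α} (hf : ∀ i l, l ≠ i → χ (swap i l) (f i) ≠ f i) :
    Function.Injective f := by
  intro i j hij
  by_contra hne
  obtain ⟨k, hki, hkj⟩ : ∃ k, k ≠ i ∧ k ≠ j := by
    obtain ⟨a, b, hai, hbi, hab⟩ := exists_ne_ne_of_three_le_card h3 i
    obtain rfl | haj := eq_or_ne a j
    · exact ⟨b, hbi, hab.symm⟩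
    · exact ⟨a, hai, haj⟩
  obtain ⟨-, hjk⟩ := mulAut_swap_eq_swap_apply hχ hne hki.symm hkj.symm
    (hf i j fun h => hne h.symm) (hf i k hki)
  apply hf j k hkj
  rw [← hij, hjk, swap_apply_of_ne_of_ne (hf i j fun h => hne h.symm).symm (hf i k hki).symm]

theorem exists_eq_conj_of_forall_isSwap (h3 : 3 ≤ Fintype.card α)
    (hχ : ∀ σ : Perm α, σ.IsSwap → (χ σ).IsSwap) : ∃ g, χ = MulAut.conj g := by
  choose f hf using exists_forall_mulAut_swap_apply_ne hχ h3
  have hinj := injective_of_forall_mulAut_swap_apply_ne hχ h3 hf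
  let g : Perm α := Equiv.ofBijective f (Finite.injective_iff_bijective.mp hinj)
  refine ⟨g, MulEquiv.toMonoidHom_injective (MonoidHom.eq_of_eqOn_dense closure_isSwap ?_)⟩
  rintro _ ⟨i, j, hij, rfl⟩
  change χ (swap i j) = g * swap i j * g⁻¹
  rw [← swap_apply_apply]
  exact (hχ _ (swap_isSwap_iff.mpr hij)).eq_swap_of_apply_ne (hinj.ne hij) (hf i j hij.symm)
    (by rw [swap_comm]; exact hf j i hij)

theorem exists_eq_conj_of_isSwap_apply (h3 : 3 ≤ Fintype.card α) {s : Perm α} (hs : s.IsSwap)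
    (hχs : (χ s).IsSwap) : ∃ g, χ = MulAut.conj g := by
  refine exists_eq_conj_of_forall_isSwap h3 fun σ hσ => ?_
  rw [isSwap_iff_cycleType] at hs hσ hχs ⊢
  obtain ⟨c, rfl⟩ := isConj_iff.mp (isConj_iff_cycleType_eq.mpr (hs.trans hσ.symm))
  rwa [map_mul, map_mul, map_inv, cycleType_conj]

end SwapPreserving

section OddInvolution

variable [Fintype α]

theorem isSwap_or_cycleType_eq_of_sq_eq_one (h6 : Fintype.card α ≤ 6) {σ : Perm α}
    (h2 : σ ^ 2 = 1) (hs : sign σ = -1) : σ.IsSwap ∨ σ.cycleType = {2, 2, 2} := by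
  have hσ1 : σ ≠ 1 := by rintro rfl; simp at hs
  have hord : orderOf σ = 2 := orderOf_eq_prime h2 hσ1
  obtain ⟨n, hn⟩ := cycleType_prime_order (hord ▸ Nat.prime_two)
  rw [hord] at hn
  have hn2 : n ≤ 2 := by
    have := sum_cycleType σ
    rw [hn, Multiset.sum_replicate, smul_eq_mul] at this
    have := σ.support.card_le_univ
    omega
  rw [sign_of_cycleType, hn, Multiset.sum_replicate, Multiset.card_replicate] at hs
  rw [isSwap_iff_cycleType, hn]
  interval_cases n
  · exact Or.inl rfl
  · exact absurd hs (by decide)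
  · exact Or.inr rfl

theorem apply_ne_of_cycleType_eq_two_two_two (h6 : Fintype.card α ≤ 6) {σ : Perm α}
    (h : σ.cycleType = {2, 2, 2}) (x : α) : σ x ≠ x := by
  have hcard : σ.support.card = 6 := by rw [← sum_cycleType, h]; rfl
  have huniv : σ.support = Finset.univ :=
    Finset.eq_univ_of_card _ (le_antisymm (Finset.card_le_univ _) (hcard ▸ h6))
  exact mem_support.mp (huniv ▸ Finset.mem_univ x)

theorem IsSwap.isSwap_or_cycleType_mulAut_apply (h6 : Fintype.card α ≤ 6) {s : Perm α}
    (hs : s.IsSwap) (χ : MulAut (Perm α)) : (χ s).IsSwap ∨ (χ s).cycleType = {2, 2, 2} := by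
  refine isSwap_or_cycleType_eq_of_sq_eq_one h6 ?_ (by rw [sign_mulAut_apply, hs.sign_eq])
  rw [← map_pow, ← hs.orderOf, pow_orderOf_eq_one, map_one]

theorem isSwap_mulAut_apply_apply_of_not_isSwap (h6 : Fintype.card α ≤ 6)
    {χ₁ χ₂ : MulAut (Perm α)} {s : Perm α} (hs : s.IsSwap) (h₁ : ¬ (χ₁ s).IsSwap)
    (h₂ : ¬ (χ₂ s).IsSwap) : (χ₂ (χ₁ s)).IsSwap := by
  have h₁' := (hs.isSwap_or_cycleType_mulAut_apply h6 χ₁).resolve_left h₁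
  have h₂' := (hs.isSwap_or_cycleType_mulAut_apply h6 χ₂).resolve_left h₂
  refine (hs.isSwap_or_cycleType_mulAut_apply h6 (χ₁.trans χ₂)).resolve_right fun h => ?_
  have hconj : IsConj s (χ₁ s) := by
    simpa using χ₂.symm.toMonoidHom.map_isConj (isConj_iff_cycleType_eq.mpr (h₂'.trans h.symm))
  rw [isConj_iff_cycleType_eq, isSwap_iff_cycleType.mp hs, h₁'] at hconj
  exact absurd hconj (by decide)

theorem exists_eq_conj_of_forall_apply_eq (h3 : 3 ≤ Fintype.card α) (h6 : Fintype.card α ≤ 6)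
    {χ : MulAut (Perm α)} {i j : α} (h : ∀ σ : Perm α, σ i = i → χ σ j = j) :
    ∃ g, χ = MulAut.conj g := by
  obtain ⟨a, b, hai, hbi, hab⟩ := exists_ne_ne_of_three_le_card h3 i
  have hs : (swap a b).IsSwap := swap_isSwap_iff.mpr hab
  refine exists_eq_conj_of_isSwap_apply h3 hs ?_
  refine (hs.isSwap_or_cycleType_mulAut_apply h6 χ).resolve_right fun hχs => ?_
  exact apply_ne_of_cycleType_eq_two_two_two h6 hχs j
    (h _ (swap_apply_of_ne_of_ne hai.symm hbi.symm))

theorem exists_eq_trans_conj_of_forall_ne_conj (h3 : 3 ≤ Fintype.card α)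
    (h6 : Fintype.card α ≤ 6) {χ₁ χ₂ : MulAut (Perm α)} (h₁ : ∀ g, χ₁ ≠ MulAut.conj g)
    (h₂ : ∀ g, χ₂ ≠ MulAut.conj g) : ∃ g, χ₂ = χ₁.trans (MulAut.conj g) := by
  obtain ⟨a, b, -, hab, -, -⟩ := Fintype.two_lt_card_iff.mp h3
  have hs : (swap a b).IsSwap := swap_isSwap_iff.mpr hab
  have h₁s : ¬ (χ₁.symm (swap a b)).IsSwap := fun h =>
    (exists_eq_conj_of_isSwap_apply h3 h (by simpa using hs)).elim h₁
  have h₂s : ¬ (χ₂ (swap a b)).IsSwap := fun h =>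
    (exists_eq_conj_of_isSwap_apply h3 hs h).elim h₂
  obtain ⟨g, hg⟩ := exists_eq_conj_of_isSwap_apply (χ := χ₁.symm.trans χ₂) h3 hs
    (isSwap_mulAut_apply_apply_of_not_isSwap h6 hs h₁s h₂s)
  exact ⟨g, MulEquiv.ext fun x => by simpa using DFunLike.congr_fun hg (χ₁ x)⟩

end OddInvolution

end Swap

section PointStabilizer

variable [Fintype α]

theorem eq_stabilizer_of_index_eq_card {T : Subgroup (Perm α)}
    (hT : T.index = Fintype.card α) {i : α} (hi : ∀ t ∈ T, t i = i) :
    T = stabilizer (Perm α) i := by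
  have h := (stabilizer (Perm α) i).index_mul_card
  rw [index_stabilizer_of_transitive, Nat.card_eq_fintype_card, ← hT, ← T.index_mul_card] at h
  exact eq_of_le_of_card_ge (fun t ht => hi t ht)
    (Nat.eq_of_mul_eq_mul_left (hT ▸ Fintype.card_pos_iff.mpr ⟨i⟩) h).le

theorem exists_mulAut_forall_mem_apply_eq [DecidableEq α] (h5 : 5 ≤ Fintype.card α)
    {T : Subgroup (Perm α)} (hT : T.index = Fintype.card α) :
    ∃ (ψ : MulAut (Perm α)) (p : α), ∀ t ∈ T, ψ t p = p := by
  have : Nontrivial α := Fintype.one_lt_card_iff_nontrivial.mp (by omega)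
  -- The action on `Perm α ⧸ T` is faithful: a nontrivial normal subgroup contains the alternating
  -- group, whose index 2 is smaller than that of `T`.
  have hcore : T.normalCore = ⊥ := by
    by_contra hne
    have hle := alternatingGroup_le_of_normal (N := T.normalCore)
      (by rwa [Nat.card_eq_fintype_card]) ((nontrivial_iff_ne_bot _).mpr hne)
    have hdvd := index_dvd_of_le (hle.trans T.normalCore_le)
    rw [alternatingGroup.index_eq_two, hT] at hdvd
    have := Nat.le_of_dvd two_pos hdvd
    omega
  obtain ⟨e⟩ : Nonempty (Perm α ⧸ T ≃ α) :=
    Finite.card_eq.mp (by rw [← index_eq_card, hT, Nat.card_eq_fintype_card])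
  let f : Perm α →* Perm α := e.permCongrHom.toMonoidHom.comp (toPermHom (Perm α) (Perm α ⧸ T))
  have hf : Function.Injective f := e.permCongrHom.injective.comp
    ((MonoidHom.ker_eq_bot_iff _).mp (normalCore_eq_ker T ▸ hcore))
  refine ⟨MulEquiv.ofBijective f (Finite.injective_iff_bijective.mp hf), e (1 : Perm α), ?_⟩
  intro t ht
  change e (t • e.symm (e (1 : Perm α))) = e (1 : Perm α)
  rw [e.symm_apply_apply, MulAction.Quotient.smul_mk, smul_eq_mul, mul_one]
  exact congrArg e (QuotientGroup.eq.mpr (by simpa using ht))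

end PointStabilizer

end Equiv.Perm

/-- If `φ` is an outer automorphism of `S_6` and `T ≤ S_6` has order `120`, then exactly one of
`T` and `φ(T)` has a fixed point in `{0,…,5}`. -/
theorem stmt13 (φ : MulAut (Equiv.Perm (Fin 6)))
    (houter : ¬ ∃ g : Equiv.Perm (Fin 6), ∀ x, φ x = g * x * g⁻¹)
    (T : Subgroup (Equiv.Perm (Fin 6))) (hT : Nat.card T = 120) :
    Xor' (∃ i : Fin 6, ∀ t ∈ T, t i = i)
      (∃ i : Fin 6, ∀ t ∈ Subgroup.map φ.toMonoidHom T, t i = i) := by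
  have hindex : T.index = Fintype.card (Fin 6) := by
    have h := T.index_mul_card
    rw [hT, Nat.card_perm, Nat.card_eq_fintype_card, Fintype.card_fin] at h
    norm_num [Nat.factorial] at h ⊢
    omega
  by_cases hfix : ∃ i : Fin 6, ∀ t ∈ T, t i = i
  · refine Or.inl ⟨hfix, fun ⟨j, hj⟩ => ?_⟩
    obtain ⟨i, hi⟩ := hfix
    have hstab := eq_stabilizer_of_index_eq_card hindex hi
    obtain ⟨g, rfl⟩ := exists_eq_conj_of_forall_apply_eq (by simp) (by simp) (i := i)
      fun σ hσ => hj _ ⟨σ, hstab ▸ hσ, rfl⟩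
    exact houter ⟨g, fun _ => rfl⟩
  · refine Or.inr ⟨?_, hfix⟩
    obtain ⟨ψ, p, hψ⟩ := exists_mulAut_forall_mem_apply_eq (by simp) hindex
    have hψ_outer : ∀ g, ψ ≠ MulAut.conj g := by
      rintro g rfl
      exact hfix ⟨g⁻¹ p, fun t ht => by simpa [Equiv.eq_symm_apply] using hψ t ht⟩
    have hφ_outer : ∀ g, φ ≠ MulAut.conj g := fun g hg => houter ⟨g, fun x => by rw [hg]; rfl⟩
    obtain ⟨g, rfl⟩ := exists_eq_trans_conj_of_forall_ne_conj (by simp) (by simp) hψ_outer hφ_outer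
    exact ⟨g p, by rintro _ ⟨t, ht, rfl⟩; simp [hψ t ht]⟩
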